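/- arXiv:1904.09771 — 4 statements merged into one kernel-verified Lean document; each statement's English description precedes it below -/
import Mathlib

section
/- For every natural number k ≥ 1 and every integer j with 1 ≤ j ≤ 2^{k−1} − 1, the minimal Colless index satisfies the symmetry c(2^{k−1} + j) = c(2^k − j). -/
/-!
The maximally balanced tree, which splits `n` leaves into `⌈n/2⌉` and `⌊n/2⌋` at every node,
attains `c(n)`. Writing `g(n)` for its Colless index, it suffices to show
`g(p + q) ≤ g(p) + g(q) + |p - q|`, by strong induction on `p + q`: halving `p` and `q` and adding
the halves crosswise gives the two halves of `p + q`, and the induction hypothesis applies to each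
crosswise sum. Symmetry then also follows by halving: the halves of `2^k + a` and `2^(k+1) - a` are
mirror images of each other in the same way, one level down.
-/

/-- Full binary trees: either a single leaf, or a node with two full binary subtrees. -/
inductive FBT : Type
  | leaf : FBT
  | node : FBT → FBT → FBT

namespace FBT

/-- Number of leaves of a full binary tree. -/
def leaves : FBT → ℕ
  | leaf => 1
  | node a b => leaves a + leaves b

/-- The Colless index: the sum over internal nodes of the absolute difference of the
numbers of leaves of the two maximal pending subtrees. -/
def colless : FBT → ℕ
  | leaf => 0
  | node a b => colless a + colless b + Nat.dist (leaves a) (leaves b)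

end FBT

/-- The minimal Colless index over all full binary trees with `n` leaves. -/
noncomputable def minColless (n : ℕ) : ℕ :=
  sInf {m : ℕ | ∃ T : FBT, T.leaves = n ∧ T.colless = m}

namespace FBT

def balanced : ℕ → FBT
  | 0 | 1 => leaf
  | n + 2 => node (balanced ((n + 2 + 1) / 2)) (balanced ((n + 2) / 2))

theorem leaves_balanced {n : ℕ} (hn : n ≠ 0) : (balanced n).leaves = n := by
  induction n using Nat.strong_induction_on with
  | _ n ih =>
    match n, hn with
    | 1, _ => rw [balanced, leaves]
    | n + 2, _ =>
      rw [balanced, leaves, ih _ (by omega) (by omega), ih _ (by omega) (by omega)]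
      omega

theorem colless_balanced_zero : (balanced 0).colless = 0 := by
  rw [balanced, colless]

theorem colless_balanced_one : (balanced 1).colless = 0 := by
  rw [balanced, colless]

theorem colless_balanced {n : ℕ} (hn : 2 ≤ n) :
    (balanced n).colless =
      (balanced ((n + 1) / 2)).colless + (balanced (n / 2)).colless + n % 2 := by
  obtain ⟨n, rfl⟩ := Nat.exists_eq_add_of_le' hn
  rw [balanced, colless, leaves_balanced (by omega), leaves_balanced (by omega), Nat.dist]
  omega

theorem colless_balanced_two : (balanced 2).colless = 0 := by
  rw [colless_balanced le_rfl, show (2 + 1) / 2 = 1 by rfl, colless_balanced_one]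

theorem colless_balanced_succ_le (q : ℕ) :
    (balanced (q + 1)).colless ≤ (balanced q).colless + (q - 1) := by
  induction q using Nat.strong_induction_on with
  | _ q ih =>
    rcases Nat.lt_or_ge q 2 with hq | hq
    · interval_cases q
      · rw [colless_balanced_one]
        exact Nat.zero_le _
      · rw [colless_balanced_two]
        exact Nat.zero_le _
    have := ih (q / 2) (by omega)
    rw [colless_balanced (n := q + 1) (by omega), colless_balanced hq,
      show (q + 1 + 1) / 2 = q / 2 + 1 by omega]
    omega

theorem colless_balanced_half_add_half (p q : ℕ) :
    (balanced ((p + q + 1) / 2)).colless + (balanced ((p + q) / 2)).colless =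
      (balanced ((p + 1) / 2 + q / 2)).colless + (balanced (p / 2 + (q + 1) / 2)).colless := by
  by_cases h : p % 2 = 0 ∧ q % 2 = 1
  · rw [show (p + 1) / 2 + q / 2 = (p + q) / 2 by omega,
      show p / 2 + (q + 1) / 2 = (p + q + 1) / 2 by omega, add_comm]
  · rw [show (p + 1) / 2 + q / 2 = (p + q + 1) / 2 by omega,
      show p / 2 + (q + 1) / 2 = (p + q) / 2 by omega]

theorem colless_balanced_add_le (p q : ℕ) :
    (balanced (p + q)).colless ≤ (balanced p).colless + (balanced q).colless + p.dist q := by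
  induction h : p + q using Nat.strong_induction_on generalizing p q with
  | _ n ih =>
    subst h
    wlog hpq : p ≤ q generalizing p q
    · have := this q p (by rwa [add_comm]) (by omega)
      rw [add_comm q p, Nat.dist_comm] at this
      omega
    rcases Nat.lt_or_ge p 2 with hp | hp
    -- the halving recursion does not hold at `p = 1`
    · interval_cases p
      · rw [zero_add, colless_balanced_zero]
        omega
      · rw [add_comm, colless_balanced_one, Nat.dist]
        have hsucc := colless_balanced_succ_le q
        omega
    have h₁ := ih _ (by omega) ((p + 1) / 2) (q / 2) rfl
    have h₂ := ih _ (by omega) (p / 2) ((q + 1) / 2) rfl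
    have hhalves := colless_balanced_half_add_half p q
    rw [colless_balanced (n := p + q) (by omega), colless_balanced hp,
      colless_balanced (n := q) (by omega)]
    simp only [Nat.dist] at *
    omega

theorem colless_balanced_le (T : FBT) : (balanced T.leaves).colless ≤ T.colless := by
  induction T with
  | leaf =>
    rw [leaves, colless_balanced_one]
    exact Nat.zero_le _
  | node a b iha ihb =>
    rw [leaves, colless]
    exact (colless_balanced_add_le _ _).trans (by gcongr)

theorem colless_balanced_two_pow_add (k : ℕ) {a : ℕ} (ha : a ≤ 2 ^ k) :
    (balanced (2 ^ k + a)).colless = (balanced (2 * 2 ^ k - a)).colless := by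
  induction k generalizing a with
  | zero =>
    interval_cases a
    · rw [show 2 ^ 0 + 0 = 1 by rfl, show 2 * 2 ^ 0 - 0 = 2 by rfl,
        colless_balanced_one, colless_balanced_two]
    · rw [show 2 ^ 0 + 1 = 2 by rfl, show 2 * 2 ^ 0 - 1 = 1 by rfl,
        colless_balanced_one, colless_balanced_two]
  | succ k ih =>
    have := Nat.one_le_two_pow (n := k)
    rw [pow_succ'] at ha ⊢
    rw [colless_balanced (n := 2 * 2 ^ k + a) (by omega),
      colless_balanced (n := 2 * (2 * 2 ^ k) - a) (by omega),
      show (2 * 2 ^ k + a + 1) / 2 = 2 ^ k + (a + 1) / 2 by omega,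
      show (2 * 2 ^ k + a) / 2 = 2 ^ k + a / 2 by omega,
      show (2 * (2 * 2 ^ k) - a + 1) / 2 = 2 * 2 ^ k - a / 2 by omega,
      show (2 * (2 * 2 ^ k) - a) / 2 = 2 * 2 ^ k - (a + 1) / 2 by omega,
      ih (by omega), ih (by omega)]
    omega

end FBT

theorem isLeast_colless_balanced {n : ℕ} (hn : n ≠ 0) :
    IsLeast {m : ℕ | ∃ T : FBT, T.leaves = n ∧ T.colless = m} (FBT.balanced n).colless := by
  refine ⟨⟨_, FBT.leaves_balanced hn, rfl⟩, ?_⟩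
  rintro _ ⟨T, rfl, rfl⟩
  exact T.colless_balanced_le

theorem minColless_eq_colless_balanced {n : ℕ} (hn : n ≠ 0) :
    minColless n = (FBT.balanced n).colless :=
  (isLeast_colless_balanced hn).csInf_eq

theorem minColless_symmetry_general (k : ℕ) (j : ℕ) (hj2 : j ≤ 2 ^ (k - 1) - 1) :
    minColless (2 ^ (k - 1) + j) = minColless (2 ^ k - j) := by
  obtain _ | k := k
  · obtain rfl : j = 0 := by simpa using hj2
    rfl
  have := Nat.one_le_two_pow (n := k)
  rw [Nat.add_sub_cancel, pow_succ'] at *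
  rw [minColless_eq_colless_balanced (by omega), minColless_eq_colless_balanced (by omega),
    FBT.colless_balanced_two_pow_add k (by omega)]

theorem minColless_symmetry (k : ℕ) (hk : 1 ≤ k) (j : ℕ) (hj1 : 1 ≤ j)
    (hj2 : j ≤ 2 ^ (k - 1) - 1) :
    minColless (2 ^ (k - 1) + j) = minColless (2 ^ k - j) :=
  minColless_symmetry_general k j hj2
end

section
/- Let n be a natural number with k = ⌈log₂ n⌉ ≥ 2 and 2^{k−1} < n ≤ 3·2^{k−2}. Then the minimal Colless index satisfies c(n) = c(n − 2^{k−2}) + (n − 2^{k−1}). (In particular, the leaf partition (n − 2^{k−2}, 2^{k−2}) at the root, with a fully balanced tree of height k−2 as one maximal pending subtree, is realized by a tree with minimal Colless index.) -/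
/-!
The minimum is attained by the maximally balanced tree, which splits `n` leaves as
`⌈n/2⌉, ⌊n/2⌋` at every node; its Colless index `c` is optimal because
`c (a + b) ≤ c a + c b + |a - b|`, proved by strong induction after halving `a` and `b`
according to their parities. On the interval `2 ^ j ≤ m ≤ 2 ^ (j + 1)` the same halving gives
`c (m + 2 ^ j) + 2 ^ j = c m + m` by induction on `j`; the theorem is the case `j = k - 2`,
`m = n - 2 ^ (k - 2)`.
-/

/-- The Colless index of the maximally balanced tree with `n` leaves. -/
def balancedColless (n : ℕ) : ℕ :=
  if n ≤ 1 then 0 else balancedColless (n / 2) + balancedColless ((n + 1) / 2) + n % 2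
termination_by n
decreasing_by all_goals omega

theorem balancedColless_of_two_le {n : ℕ} (h : 2 ≤ n) :
    balancedColless n = balancedColless (n / 2) + balancedColless ((n + 1) / 2) + n % 2 := by
  rw [balancedColless, if_neg (by omega)]

@[simp] theorem balancedColless_zero : balancedColless 0 = 0 := by rw [balancedColless]; simp

@[simp] theorem balancedColless_one : balancedColless 1 = 0 := by rw [balancedColless]; simp

@[simp] theorem balancedColless_two_mul (c : ℕ) :
    balancedColless (2 * c) = balancedColless c + balancedColless c := by
  rcases Nat.eq_zero_or_pos c with rfl | hc
  · simp
  · rw [balancedColless_of_two_le (by omega), show 2 * c / 2 = c by omega,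
      show (2 * c + 1) / 2 = c by omega]
    simp

theorem balancedColless_two_mul_add_one {c : ℕ} (hc : 1 ≤ c) :
    balancedColless (2 * c + 1) = balancedColless (c + 1) + balancedColless c + 1 := by
  rw [balancedColless_of_two_le (by omega), show (2 * c + 1) / 2 = c by omega,
    show (2 * c + 1 + 1) / 2 = c + 1 by omega]
  omega

theorem balancedColless_add_one_add_one_le {a : ℕ} (ha : 1 ≤ a) :
    balancedColless (a + 1) + 1 ≤ balancedColless a + a := by
  induction a using Nat.strong_induction_on with
  | _ a ih =>
  obtain rfl | ha := ha.eq_or_lt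
  · simpa using balancedColless_two_mul 1
  obtain ⟨s, rfl | rfl⟩ := Nat.even_or_odd' a
  · have := ih s (by omega) (by omega)
    rw [balancedColless_two_mul_add_one (by omega), balancedColless_two_mul]
    omega
  · have := ih s (by omega) (by omega)
    rw [show 2 * s + 1 + 1 = 2 * (s + 1) by ring, balancedColless_two_mul,
      balancedColless_two_mul_add_one (by omega)]
    omega

theorem balancedColless_add_le_add_of_le {a b : ℕ} (hb : 1 ≤ b) (hba : b ≤ a) :
    balancedColless (a + b) + b ≤ balancedColless a + balancedColless b + a := by
  induction h : a + b using Nat.strong_induction_on generalizing a b with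
  | _ n ih =>
  subst h
  obtain rfl | hb := hb.eq_or_lt
  · simpa using balancedColless_add_one_add_one_le hba
  obtain rfl | hba := hba.eq_or_lt
  · rw [← two_mul, balancedColless_two_mul]
  obtain ⟨s, rfl | rfl⟩ := Nat.even_or_odd' a <;> obtain ⟨t, rfl | rfl⟩ := Nat.even_or_odd' b
  · have := ih (s + t) (by omega) (a := s) (b := t) (by omega) (by omega) (by ring)
    rw [← mul_add]
    simp only [balancedColless_two_mul]
    omega
  · have h1 := ih (s + t + 1) (by omega) (a := s) (b := t + 1) (by omega) (by omega) (by ring)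
    have h2 := ih (s + t) (by omega) (a := s) (b := t) (by omega) (by omega) (by ring)
    rw [show 2 * s + (2 * t + 1) = 2 * (s + t) + 1 by ring,
      balancedColless_two_mul_add_one (by omega), balancedColless_two_mul,
      balancedColless_two_mul_add_one (by omega)]
    omega
  · have h1 := ih (s + t + 1) (by omega) (a := s + 1) (b := t) (by omega) (by omega) (by ring)
    have h2 := ih (s + t) (by omega) (a := s) (b := t) (by omega) (by omega) (by ring)
    rw [show 2 * s + 1 + 2 * t = 2 * (s + t) + 1 by ring,
      balancedColless_two_mul_add_one (by omega), balancedColless_two_mul,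
      balancedColless_two_mul_add_one (by omega)]
    omega
  · have h1 := ih (s + t + 1) (by omega) (a := s + 1) (b := t) (by omega) (by omega) (by ring)
    have h2 := ih (s + t + 1) (by omega) (a := s) (b := t + 1) (by omega) (by omega) (by ring)
    rw [show 2 * s + 1 + (2 * t + 1) = 2 * (s + t + 1) by ring, balancedColless_two_mul,
      balancedColless_two_mul_add_one (by omega), balancedColless_two_mul_add_one (by omega)]
    omega

theorem balancedColless_add_two_pow {j m : ℕ} (h1 : 2 ^ j ≤ m) (h2 : m ≤ 2 ^ (j + 1)) :
    balancedColless (m + 2 ^ j) + 2 ^ j = balancedColless m + m := by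
  induction j generalizing m with
  | zero =>
    obtain rfl | rfl : m = 1 ∨ m = 2 := by omega
    · rw [show 1 + 2 ^ 0 = 2 * 1 by rfl, balancedColless_two_mul]
      simp
    · rw [show 2 + 2 ^ 0 = 2 * 1 + 1 by rfl, balancedColless_two_mul_add_one le_rfl]
      simp
  | succ i ih =>
    simp only [pow_succ] at h1 h2 ⊢
    obtain ⟨t, rfl | rfl⟩ := Nat.even_or_odd' m
    · have := ih (m := t) (by omega) (by omega)
      rw [show 2 * t + 2 ^ i * 2 = 2 * (t + 2 ^ i) by ring, balancedColless_two_mul,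
        balancedColless_two_mul]
      omega
    · have ht := ih (m := t) (by omega) (by omega)
      have ht' := ih (m := t + 1) (by omega) (by omega)
      rw [show 2 * t + 1 + 2 ^ i * 2 = 2 * (t + 2 ^ i) + 1 by ring,
        balancedColless_two_mul_add_one (by omega), balancedColless_two_mul_add_one (by omega),
        show t + 2 ^ i + 1 = t + 1 + 2 ^ i by ring]
      omega

namespace FBT

theorem one_le_leaves (T : FBT) : 1 ≤ T.leaves := by
  induction T with
  | leaf => rfl
  | node a b iha ihb => simp only [leaves]; omega

theorem balancedColless_leaves_le_colless (T : FBT) : balancedColless T.leaves ≤ T.colless := by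
  induction T with
  | leaf => simp [leaves]
  | node a b iha ihb =>
    simp only [leaves, colless, Nat.dist]
    rcases le_total b.leaves a.leaves with h | h
    · have := balancedColless_add_le_add_of_le b.one_le_leaves h
      omega
    · have := balancedColless_add_le_add_of_le a.one_le_leaves h
      rw [add_comm b.leaves] at this
      omega

theorem exists_leaves_eq_colless_eq_balancedColless {n : ℕ} (hn : 1 ≤ n) :
    ∃ T : FBT, T.leaves = n ∧ T.colless = balancedColless n := by
  induction n using Nat.strong_induction_on with
  | _ n ih =>
  obtain rfl | hn := hn.eq_or_lt
  · exact ⟨leaf, rfl, by simp [colless]⟩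
  obtain ⟨T₁, hT₁, hT₁'⟩ := ih ((n + 1) / 2) (by omega) (by omega)
  obtain ⟨T₂, hT₂, hT₂'⟩ := ih (n / 2) (by omega) (by omega)
  refine ⟨node T₁ T₂, by simp only [leaves]; omega, ?_⟩
  simp only [colless, hT₁, hT₂, hT₁', hT₂', Nat.dist, balancedColless_of_two_le hn]
  omega

end FBT

theorem minColless_eq_balancedColless {n : ℕ} (hn : 1 ≤ n) : minColless n = balancedColless n := by
  obtain ⟨T, hT, hT'⟩ := FBT.exists_leaves_eq_colless_eq_balancedColless hn
  refine le_antisymm (Nat.sInf_le ⟨T, hT, hT'⟩) (le_csInf ⟨_, T, hT, hT'⟩ ?_)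
  rintro _ ⟨S, rfl, rfl⟩
  exact S.balancedColless_leaves_le_colless

theorem minColless_first_interval_general (n : ℕ) (k : ℕ) (hk2 : 2 ≤ k)
    (h1 : 2 ^ (k - 1) < n) (h2 : n ≤ 3 * 2 ^ (k - 2)) :
    minColless n = minColless (n - 2 ^ (k - 2)) + (n - 2 ^ (k - 1)) := by
  have hpow : 2 ^ (k - 1) = 2 ^ (k - 2) * 2 := by rw [← pow_succ]; congr 1; omega
  have hbal := balancedColless_add_two_pow (j := k - 2) (m := n - 2 ^ (k - 2)) (by omega)
    (by rw [pow_succ]; omega)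
  rw [Nat.sub_add_cancel (by omega)] at hbal
  rw [minColless_eq_balancedColless (by omega), minColless_eq_balancedColless (by omega)]
  omega

theorem minColless_first_interval (n : ℕ) (k : ℕ) (hk : k = Nat.clog 2 n) (hk2 : 2 ≤ k)
    (h1 : 2 ^ (k - 1) < n) (h2 : n ≤ 3 * 2 ^ (k - 2)) :
    minColless n = minColless (n - 2 ^ (k - 2)) + (n - 2 ^ (k - 1)) :=
  minColless_first_interval_general n k hk2 h1 h2
end

section
/- Every full binary tree with minimal Colless index also has minimal Sackin index: if T is a full binary tree with n leaves and C(T) = c(n), then S(T) equals the minimum of S(T') over all full binary trees T' with n leaves. -/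
namespace FBT

/-- The Sackin index: the sum over internal nodes of the number of leaves of the
subtree rooted at that node. -/
def sackin : FBT → ℕ
  | leaf => 0
  | node a b => sackin a + sackin b + (leaves a + leaves b)

end FBT

/-- The minimal Sackin index over all full binary trees with `n` leaves. -/
noncomputable def minSackin (n : ℕ) : ℕ :=
  sInf {m : ℕ | ∃ T : FBT, T.leaves = n ∧ T.sackin = m}

/-!
Since `|a - b| = a + b - 2 min a b`, the Sackin index is the Colless index plus twice `minorSum`,
the sum over internal nodes of the number of leaves of the smaller child subtree. The maximally
balanced tree with `n` leaves minimizes the Sackin index and maximizes `minorSum`, hence it also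
minimizes the Colless index, and a Colless-minimal tree `T` satisfies
`S(T) = C(T) + 2 minorSum(T) ≤ C(B) + 2 minorSum(B) = S(B)` for `B = maxBalanced n`.
Both extremal properties are inequalities between the values on balanced trees with `a`, `b` and
`a + b` leaves, proved by halving `a` and `b` according to their parities.
-/

@[elab_as_elim]
theorem Nat.induction_on_halves {P : ℕ → ℕ → Prop} (symm : ∀ a b, P a b → P b a)
    (one_one : P 1 1)
    (even_one : ∀ x, 1 ≤ x → P x 1 → P (2 * x) 1)
    (odd_one : ∀ x, 1 ≤ x → P x 1 → P (2 * x + 1) 1)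
    (even_even : ∀ x y, 1 ≤ x → 1 ≤ y → P x y → P (2 * x) (2 * y))
    (even_odd : ∀ x y, 1 ≤ x → 1 ≤ y → P x y → P x (y + 1) → P (2 * x) (2 * y + 1))
    (odd_odd : ∀ x y, 1 ≤ x → 1 ≤ y → P x (y + 1) → P (x + 1) y →
      P (2 * x + 1) (2 * y + 1))
    (a b : ℕ) (ha : 1 ≤ a) (hb : 1 ≤ b) : P a b := by
  induction h : a + b using Nat.strong_induction_on generalizing a b with
  | _ n ih =>
  subst h
  have ih' : ∀ a' b', 1 ≤ a' → 1 ≤ b' → a' + b' < a + b → P a' b' :=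
    fun a' b' ha' hb' h => ih _ h a' b' ha' hb' rfl
  obtain ⟨x, rfl | rfl⟩ := Nat.even_or_odd' a <;>
    obtain ⟨y, rfl | rfl⟩ := Nat.even_or_odd' b
  · exact even_even x y (by omega) (by omega) (ih' _ _ (by omega) (by omega) (by omega))
  · obtain rfl | hy := Nat.eq_zero_or_pos y
    · exact even_one x (by omega) (ih' _ _ (by omega) le_rfl (by omega))
    · exact even_odd x y (by omega) hy (ih' _ _ (by omega) hy (by omega))
        (ih' _ _ (by omega) (by omega) (by omega))
  · refine symm _ _ ?_
    obtain rfl | hx := Nat.eq_zero_or_pos x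
    · exact even_one y (by omega) (ih' _ _ (by omega) le_rfl (by omega))
    · exact even_odd y x (by omega) hx (ih' _ _ (by omega) hx (by omega))
        (ih' _ _ (by omega) (by omega) (by omega))
  · obtain rfl | hx := Nat.eq_zero_or_pos x <;> obtain rfl | hy := Nat.eq_zero_or_pos y
    · exact one_one
    · exact symm _ _ (odd_one y hy (ih' _ _ hy le_rfl (by omega)))
    · exact odd_one x hx (ih' _ _ hx le_rfl (by omega))
    · exact odd_odd x y hx hy (ih' _ _ hx (by omega) (by omega))
        (ih' _ _ (by omega) hy (by omega))

namespace FBT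

def minorSum : FBT → ℕ
  | leaf => 0
  | node a b => minorSum a + minorSum b + min (leaves a) (leaves b)

theorem sackin_eq_colless_add_minorSum (T : FBT) : T.sackin = T.colless + 2 * T.minorSum := by
  induction T with
  | leaf => rfl
  | node L R ihL ihR => simp only [sackin, colless, minorSum, Nat.dist]; omega

def maxBalanced : ℕ → FBT
  | 0 | 1 => leaf
  | n + 2 => node (maxBalanced ((n + 2) / 2)) (maxBalanced ((n + 3) / 2))

theorem leaves_maxBalanced {n : ℕ} (hn : 1 ≤ n) : (maxBalanced n).leaves = n := by
  induction n using Nat.strong_induction_on with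
  | _ n ih =>
  match n, hn with
  | 1, _ => rw [maxBalanced, leaves]
  | n + 2, _ =>
    rw [maxBalanced, leaves, ih _ (by omega) (by omega), ih _ (by omega) (by omega)]
    omega

theorem maxBalanced_two_mul {x : ℕ} (hx : 1 ≤ x) :
    maxBalanced (2 * x) = node (maxBalanced x) (maxBalanced x) := by
  obtain ⟨n, rfl⟩ : ∃ n, x = n + 1 := ⟨x - 1, by omega⟩
  rw [show 2 * (n + 1) = 2 * n + 2 by ring, maxBalanced]
  congr 2 <;> omega

theorem maxBalanced_two_mul_add_one {x : ℕ} (hx : 1 ≤ x) :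
    maxBalanced (2 * x + 1) = node (maxBalanced x) (maxBalanced (x + 1)) := by
  obtain ⟨n, rfl⟩ : ∃ n, x = n + 1 := ⟨x - 1, by omega⟩
  rw [show 2 * (n + 1) + 1 = (2 * n + 1) + 2 by ring, maxBalanced]
  congr 2 <;> omega

@[simp] theorem maxBalanced_one : maxBalanced 1 = leaf := by rw [maxBalanced]

theorem sackin_maxBalanced_two_mul {x : ℕ} (hx : 1 ≤ x) :
    (maxBalanced (2 * x)).sackin = 2 * (maxBalanced x).sackin + 2 * x := by
  rw [maxBalanced_two_mul hx, sackin, leaves_maxBalanced hx]; ring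

theorem sackin_maxBalanced_two_mul_add_one {x : ℕ} (hx : 1 ≤ x) :
    (maxBalanced (2 * x + 1)).sackin =
      (maxBalanced x).sackin + (maxBalanced (x + 1)).sackin + (2 * x + 1) := by
  rw [maxBalanced_two_mul_add_one hx, sackin, leaves_maxBalanced hx,
    leaves_maxBalanced (by omega)]
  ring

theorem minorSum_maxBalanced_two_mul {x : ℕ} (hx : 1 ≤ x) :
    (maxBalanced (2 * x)).minorSum = 2 * (maxBalanced x).minorSum + x := by
  rw [maxBalanced_two_mul hx, minorSum, leaves_maxBalanced hx, min_self]; ring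

theorem minorSum_maxBalanced_two_mul_add_one {x : ℕ} (hx : 1 ≤ x) :
    (maxBalanced (2 * x + 1)).minorSum =
      (maxBalanced x).minorSum + (maxBalanced (x + 1)).minorSum + x := by
  rw [maxBalanced_two_mul_add_one hx, minorSum, leaves_maxBalanced hx,
    leaves_maxBalanced (by omega), min_eq_left (by omega)]

theorem sackin_maxBalanced_add_le {a b : ℕ} (ha : 1 ≤ a) (hb : 1 ≤ b) :
    (maxBalanced (a + b)).sackin ≤
      (maxBalanced a).sackin + (maxBalanced b).sackin + (a + b) := by
  refine Nat.induction_on_halves ?_ ?_ ?_ ?_ ?_ ?_ ?_ a b ha hb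
  · intro a b h; rwa [add_comm b, add_comm (maxBalanced b).sackin]
  · rw [show 1 + 1 = 2 * 1 from rfl, sackin_maxBalanced_two_mul le_rfl]; simp [sackin]
  · intro x hx ih
    rw [sackin_maxBalanced_two_mul_add_one hx, sackin_maxBalanced_two_mul hx]
    simp only [maxBalanced_one, sackin] at ih ⊢; omega
  · intro x hx ih
    rw [show 2 * x + 1 + 1 = 2 * (x + 1) by ring, sackin_maxBalanced_two_mul (by omega),
      sackin_maxBalanced_two_mul_add_one hx]
    simp only [maxBalanced_one, sackin] at ih ⊢; omega
  · intro x y hx hy ih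
    rw [← mul_add, sackin_maxBalanced_two_mul hx, sackin_maxBalanced_two_mul hy,
      sackin_maxBalanced_two_mul (by omega)]
    omega
  · intro x y hx hy ih₁ ih₂
    rw [show 2 * x + (2 * y + 1) = 2 * (x + y) + 1 by ring, sackin_maxBalanced_two_mul hx,
      sackin_maxBalanced_two_mul_add_one hy, sackin_maxBalanced_two_mul_add_one (by omega)]
    rw [← add_assoc] at ih₂; omega
  · intro x y hx hy ih₁ ih₂
    rw [show 2 * x + 1 + (2 * y + 1) = 2 * (x + y + 1) by ring,
      sackin_maxBalanced_two_mul (by omega), sackin_maxBalanced_two_mul_add_one hx,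
      sackin_maxBalanced_two_mul_add_one hy]
    rw [← add_assoc] at ih₁; rw [show x + 1 + y = x + y + 1 by ring] at ih₂; omega

theorem minorSum_maxBalanced_add_ge {a b : ℕ} (ha : 1 ≤ a) (hb : 1 ≤ b) :
    (maxBalanced a).minorSum + (maxBalanced b).minorSum + min a b ≤
      (maxBalanced (a + b)).minorSum := by
  refine Nat.induction_on_halves ?_ ?_ ?_ ?_ ?_ ?_ ?_ a b ha hb
  · intro a b h; rwa [add_comm b, add_comm (maxBalanced b).minorSum, min_comm]
  · rw [show 1 + 1 = 2 * 1 from rfl, minorSum_maxBalanced_two_mul le_rfl]; simp [minorSum]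
  · intro x hx ih
    rw [minorSum_maxBalanced_two_mul_add_one hx, minorSum_maxBalanced_two_mul hx]
    simp only [maxBalanced_one, minorSum] at ih ⊢; omega
  · intro x hx ih
    rw [show 2 * x + 1 + 1 = 2 * (x + 1) by ring, minorSum_maxBalanced_two_mul (by omega),
      minorSum_maxBalanced_two_mul_add_one hx]
    simp only [maxBalanced_one, minorSum] at ih ⊢; omega
  · intro x y hx hy ih
    rw [← mul_add, minorSum_maxBalanced_two_mul hx, minorSum_maxBalanced_two_mul hy,
      minorSum_maxBalanced_two_mul (by omega)]
    omega
  · intro x y hx hy ih₁ ih₂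
    rw [show 2 * x + (2 * y + 1) = 2 * (x + y) + 1 by ring, minorSum_maxBalanced_two_mul hx,
      minorSum_maxBalanced_two_mul_add_one hy, minorSum_maxBalanced_two_mul_add_one (by omega)]
    rw [← add_assoc] at ih₂; omega
  · intro x y hx hy ih₁ ih₂
    rw [show 2 * x + 1 + (2 * y + 1) = 2 * (x + y + 1) by ring,
      minorSum_maxBalanced_two_mul (by omega), minorSum_maxBalanced_two_mul_add_one hx,
      minorSum_maxBalanced_two_mul_add_one hy]
    obtain rfl | hxy := eq_or_ne x y
    · rw [show x + x + 1 = 2 * x + 1 by ring, minorSum_maxBalanced_two_mul_add_one hx]; omega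
    rw [← add_assoc] at ih₁; rw [show x + 1 + y = x + y + 1 by ring] at ih₂; omega

theorem sackin_maxBalanced_leaves_le (T : FBT) : (maxBalanced T.leaves).sackin ≤ T.sackin := by
  induction T with
  | leaf => simp [leaves, sackin]
  | node L R ihL ihR =>
    have := sackin_maxBalanced_add_le L.one_le_leaves R.one_le_leaves
    simp only [leaves, sackin]; omega

theorem minorSum_le_maxBalanced_leaves (T : FBT) :
    T.minorSum ≤ (maxBalanced T.leaves).minorSum := by
  induction T with
  | leaf => simp [leaves, minorSum]
  | node L R ihL ihR =>
    have := minorSum_maxBalanced_add_ge L.one_le_leaves R.one_le_leaves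
    simp only [leaves, minorSum]; omega

theorem colless_maxBalanced_leaves_le (T : FBT) : (maxBalanced T.leaves).colless ≤ T.colless := by
  have h₁ := sackin_maxBalanced_leaves_le T
  have h₂ := minorSum_le_maxBalanced_leaves T
  rw [sackin_eq_colless_add_minorSum, sackin_eq_colless_add_minorSum] at h₁
  omega

theorem isLeast_of_maxBalanced_le {f : FBT → ℕ} {n : ℕ} (hn : 1 ≤ n)
    (hf : ∀ T, f (maxBalanced T.leaves) ≤ f T) :
    IsLeast {m | ∃ T : FBT, T.leaves = n ∧ f T = m} (f (maxBalanced n)) :=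
  ⟨⟨maxBalanced n, leaves_maxBalanced hn, rfl⟩, by rintro _ ⟨T, rfl, rfl⟩; exact hf T⟩

end FBT

open FBT

theorem minColless_eq_colless_maxBalanced {n : ℕ} (hn : 1 ≤ n) :
    minColless n = (maxBalanced n).colless :=
  (isLeast_of_maxBalanced_le hn colless_maxBalanced_leaves_le).csInf_eq

theorem minSackin_eq_sackin_maxBalanced {n : ℕ} (hn : 1 ≤ n) :
    minSackin n = (maxBalanced n).sackin :=
  (isLeast_of_maxBalanced_le hn sackin_maxBalanced_leaves_le).csInf_eq

theorem min_colless_implies_min_sackin (T : FBT) (n : ℕ) (hn : T.leaves = n)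
    (h : T.colless = minColless n) : T.sackin = minSackin n := by
  subst hn
  rw [minColless_eq_colless_maxBalanced T.one_le_leaves] at h
  rw [minSackin_eq_sackin_maxBalanced T.one_le_leaves]
  refine le_antisymm ?_ T.sackin_maxBalanced_leaves_le
  calc T.sackin = T.colless + 2 * T.minorSum := T.sackin_eq_colless_add_minorSum
    _ ≤ (maxBalanced T.leaves).colless + 2 * (maxBalanced T.leaves).minorSum := by
      rw [h]; gcongr; exact T.minorSum_le_maxBalanced_leaves
    _ = (maxBalanced T.leaves).sackin := (sackin_eq_colless_add_minorSum _).symm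
end

section
/- For every n ≥ 1, the set of full binary trees with n leaves and minimal Colless index is contained in the set of full binary trees with n leaves and minimal Sackin index; consequently, the number of full binary trees with n leaves and minimal Colless index is at most the number of full binary trees with n leaves and minimal Sackin index. -/
/-! ### Auxiliary development -/

def F (n : ℕ) : ℕ :=
  if h1 : n ≤ 1 then 0
  else if h2 : n % 2 = 0 then 2 * F (n / 2)
  else F (n / 2) + F (n / 2 + 1) + 1
decreasing_by all_goals omega

lemma F_le_one {n : ℕ} (h : n ≤ 1) : F n = 0 := by rw [F]; simp [h]

lemma F_even {m : ℕ} (h : 1 ≤ m) : F (2 * m) = 2 * F m := by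
  rw [F]
  have h1 : ¬ (2 * m ≤ 1) := by omega
  simp [h1, Nat.mul_div_cancel_left m two_pos]

lemma F_odd {m : ℕ} (h : 1 ≤ m) : F (2 * m + 1) = F m + F (m + 1) + 1 := by
  rw [F]
  have h1 : ¬ (2 * m + 1 ≤ 1) := by omega
  have h2 : ¬ ((2 * m + 1) % 2 = 0) := by omega
  have h3 : (2 * m + 1) / 2 = m := by omega
  simp [h1, h2, h3]

lemma F0 : F 0 = 0 := F_le_one (by norm_num)
lemma F1 : F 1 = 0 := F_le_one le_rfl
lemma F2 : F 2 = 0 := by have := F_even (m := 1) le_rfl; rw [show 2*1 = 2 from rfl, F1] at this; omega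
lemma F3 : F 3 = 1 := by have := F_odd (m := 1) le_rfl; rw [show 2*1+1 = 3 from rfl, F1, F2] at this; omega
lemma F4 : F 4 = 0 := by have := F_even (m := 2) one_le_two; rw [show 2*2 = 4 from rfl, F2] at this; omega

lemma clog_eq_succ {j n : ℕ} (h1 : 2^j < n) (h2 : n ≤ 2^(j+1)) : Nat.clog 2 n = j + 1 := by
  refine le_antisymm ((Nat.clog_le_iff_le_pow one_lt_two).mpr h2) ?_
  by_contra h
  have : n ≤ 2^j := (Nat.clog_le_iff_le_pow one_lt_two).mp (by omega)
  omega

lemma clog1 : Nat.clog 2 1 = 0 := Nat.clog_one_right 2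
lemma clog2 : Nat.clog 2 2 = 1 := clog_eq_succ (by norm_num) (by norm_num)
lemma clog3 : Nat.clog 2 3 = 2 := clog_eq_succ (by norm_num) (by norm_num)
lemma clog4 : Nat.clog 2 4 = 2 := clog_eq_succ (by norm_num) (by norm_num)

lemma clog_lb {n : ℕ} (h : 2 ≤ n) : 2^(Nat.clog 2 n - 1) < n :=
  Nat.pow_pred_clog_lt_self one_lt_two (by omega)

lemma clog_ub (n : ℕ) : n ≤ 2^(Nat.clog 2 n) := Nat.le_pow_clog one_lt_two n

lemma clog_pos {n : ℕ} (h : 2 ≤ n) : 1 ≤ Nat.clog 2 n := Nat.clog_pos one_lt_two (by omega)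

lemma two_pow_pred {κ : ℕ} (h : 1 ≤ κ) : 2^κ = 2 * 2^(κ-1) := by
  conv_lhs => rw [show κ = (κ-1)+1 by omega, pow_succ, mul_comm]

lemma clog_ge_two {n : ℕ} (h : 3 ≤ n) : 2 ≤ Nat.clog 2 n := by
  by_contra hc
  have h2 : n ≤ 2^(Nat.clog 2 n) := clog_ub n
  interval_cases (Nat.clog 2 n) <;> simp_all <;> omega

set_option maxHeartbeats 800000 in
/-- special case p = 1 of the key inequality -/
lemma key1 : ∀ q, 1 ≤ q →
    F (q+1) + (2^(Nat.clog 2 (q+1) - 2) - 1) + (q - 2^(Nat.clog 2 (q+1) - 1)) ≤ F q + (q - 1) := by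
  intro q
  induction q using Nat.strong_induction_on with
  | _ q IH =>
  intro hq
  rcases lt_or_ge q 4 with h4 | h4
  · interval_cases q
    · simp [clog2, F1, F2]
    · simp [clog3, F2, F3]
    · simp [clog4, F3, F4]
  · rcases Nat.mod_two_eq_zero_or_one q with hp | hp
    · -- q = 2b, b ≥ 2
      obtain ⟨b, rfl⟩ : ∃ b, q = 2*b := ⟨q/2, by omega⟩
      have hb : 2 ≤ b := by omega
      have IHb := IH b (by omega) (by omega)
      set κ := Nat.clog 2 (b+1) with hκ
      have hκ2 : 2 ≤ κ := clog_ge_two (by omega)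
      have hlb : 2^(κ-1) < b+1 := clog_lb (by omega)
      have hub : b+1 ≤ 2^κ := clog_ub _
      have e1 : 2^κ = 2*2^(κ-1) := two_pow_pred (by omega)
      have e2 : 2^(κ-1) = 2*2^(κ-2) := by
        conv_lhs => rw [show κ-1 = (κ-2)+1 by omega, pow_succ, mul_comm]
      have hk : Nat.clog 2 (2*b+1) = κ + 1 := clog_eq_succ (by omega) (by rw [pow_succ]; omega)
      rw [hk, F_odd (by omega : 1 ≤ b), F_even (by omega : 1 ≤ b)]
      have e3 : κ + 1 - 2 = κ - 1 := by omega
      have e4 : κ + 1 - 1 = κ := by omega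
      rw [e3, e4]
      omega
    · -- q = 2b+1, b ≥ 2
      obtain ⟨b, rfl⟩ : ∃ b, q = 2*b+1 := ⟨q/2, by omega⟩
      have hb : 2 ≤ b := by omega
      have IHb := IH b (by omega) (by omega)
      set κ := Nat.clog 2 (b+1) with hκ
      have hκ2 : 2 ≤ κ := clog_ge_two (by omega)
      have hlb : 2^(κ-1) < b+1 := clog_lb (by omega)
      have hub : b+1 ≤ 2^κ := clog_ub _
      have e1 : 2^κ = 2*2^(κ-1) := two_pow_pred (by omega)
      have e2 : 2^(κ-1) = 2*2^(κ-2) := by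
        conv_lhs => rw [show κ-1 = (κ-2)+1 by omega, pow_succ, mul_comm]
      have hk : Nat.clog 2 (2*b+1+1) = κ + 1 := by
        have h5 : 2*b+1+1 = 2*(b+1) := by ring
        rw [h5]
        exact clog_eq_succ (by omega) (by rw [pow_succ]; omega)
      rw [hk, F_odd (by omega : 1 ≤ b), show 2*b+1+1 = 2*(b+1) by ring,
        F_even (by omega : 1 ≤ b+1)]
      have e3 : κ + 1 - 2 = κ - 1 := by omega
      have e4 : κ + 1 - 1 = κ := by omega
      rw [e3, e4]
      omega

set_option maxHeartbeats 1600000 in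
/-- The key inequality: superadditivity of F with slack terms that force
minimal-Colless splits into the Sackin-optimal range. -/
lemma key : ∀ n p q, p + q = n → 1 ≤ q → p ≤ q →
    F n + (2^(Nat.clog 2 n - 2) - p) + (q - 2^(Nat.clog 2 n - 1)) ≤ F p + F q + (q - p) := by
  intro n
  induction n using Nat.strong_induction_on with
  | _ n IH =>
  intro p q hpq hq hle
  subst hpq
  rcases lt_or_ge (p + q) 5 with h5 | h5
  · -- small cases p+q ≤ 4
    have hqub : q ≤ 4 := by omega
    interval_cases q <;> interval_cases p <;>
      simp_all [clog1, clog2, clog3, clog4, F0, F1, F2, F3, F4] <;> omega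
  rcases Nat.eq_or_lt_of_le (Nat.zero_le p) with hp0 | hp0
  · -- p = 0
    rw [← hp0]
    simp only [F0, Nat.zero_add, Nat.sub_zero]
    have hq2 : 2 ≤ q := by omega
    have hlb : 2^(Nat.clog 2 q - 1) < q := clog_lb hq2
    have hκ : 1 ≤ Nat.clog 2 q := clog_pos hq2
    rcases Nat.lt_or_ge (Nat.clog 2 q) 2 with h | h
    · have : Nat.clog 2 q = 1 := by omega
      simp [this]
      omega
    · have e2 : 2^(Nat.clog 2 q - 1) = 2*2^(Nat.clog 2 q - 2) := by
        conv_lhs => rw [show Nat.clog 2 q -1 = (Nat.clog 2 q -2)+1 by omega, pow_succ, mul_comm]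
      omega
  rcases Nat.eq_or_lt_of_le hp0 with hp1 | hp1
  · -- p = 1
    have hp1' : p = 1 := hp1.symm
    subst hp1'
    have := key1 q hq
    rw [show q + 1 = 1 + q by ring] at this
    simp only [F1] at this ⊢
    omega
  rcases Nat.eq_or_lt_of_le hle with hpq | hpq
  · -- p = q
    subst hpq
    rw [show p + p = 2*p by ring, F_even (by omega : 1 ≤ p)]
    rw [show (2:ℕ)*p = p + p by ring]
    have hn : 2 ≤ p + p := by omega
    have hlb : 2^(Nat.clog 2 (p+p) - 1) < p + p := clog_lb hn
    have hub : p + p ≤ 2^(Nat.clog 2 (p+p)) := clog_ub _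
    have hκ : 1 ≤ Nat.clog 2 (p+p) := clog_pos hn
    have e1 : 2^(Nat.clog 2 (p+p)) = 2*2^(Nat.clog 2 (p+p)-1) := two_pow_pred hκ
    rcases Nat.lt_or_ge (Nat.clog 2 (p+p)) 2 with h | h
    · have h1 : Nat.clog 2 (p+p) = 1 := by omega
      simp [h1] at hlb hub ⊢
      omega
    · have e2 : 2^(Nat.clog 2 (p+p) - 1) = 2*2^(Nat.clog 2 (p+p) - 2) := by
        conv_lhs => rw [show Nat.clog 2 (p+p) -1 = (Nat.clog 2 (p+p) -2)+1 by omega,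
          pow_succ, mul_comm]
      omega
  -- now 2 ≤ p < q, p + q ≥ 5
  rcases Nat.mod_two_eq_zero_or_one p with hp2 | hp2 <;>
    rcases Nat.mod_two_eq_zero_or_one q with hq2 | hq2
  · -- p = 2a, q = 2b : even-even
    obtain ⟨a, rfl⟩ : ∃ a, p = 2*a := ⟨p/2, by omega⟩
    obtain ⟨b, rfl⟩ : ∃ b, q = 2*b := ⟨q/2, by omega⟩
    have ha : 1 ≤ a := by omega
    have hab : a < b := by omega
    have IH1 := IH (a+b) (by omega) a b rfl (by omega) (by omega)
    set κ := Nat.clog 2 (a+b) with hκdef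
    have hκ2 : 2 ≤ κ := clog_ge_two (by omega)
    have hlb : 2^(κ-1) < a+b := clog_lb (by omega)
    have hub : a+b ≤ 2^κ := clog_ub _
    have e1 : 2^κ = 2*2^(κ-1) := two_pow_pred (by omega)
    have e2 : 2^(κ-1) = 2*2^(κ-2) := by
      conv_lhs => rw [show κ-1 = (κ-2)+1 by omega, pow_succ, mul_comm]
    have hk : Nat.clog 2 (2*a + 2*b) = κ + 1 := by
      rw [show 2*a+2*b = 2*(a+b) by ring]
      exact clog_eq_succ (by omega) (by rw [pow_succ]; omega)
    rw [hk, show 2*a+2*b = 2*(a+b) by ring, F_even (by omega : 1 ≤ a+b),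
      F_even ha, F_even (by omega : 1 ≤ b)]
    rw [show κ + 1 - 2 = κ - 1 by omega, Nat.add_sub_cancel]
    omega
  · -- p = 2a, q = 2b+1 : even-odd
    obtain ⟨a, rfl⟩ : ∃ a, p = 2*a := ⟨p/2, by omega⟩
    obtain ⟨b, rfl⟩ : ∃ b, q = 2*b+1 := ⟨q/2, by omega⟩
    have ha : 1 ≤ a := by omega
    have hb : 1 ≤ b := by omega
    have hab : a ≤ b := by omega
    have IH1 := IH (a+b) (by omega) a b rfl (by omega) (by omega)
    have IH2 := IH (a+b+1) (by omega) a (b+1) rfl (by omega) (by omega)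
    set κ1 := Nat.clog 2 (a+b) with hκ1def
    set κ2 := Nat.clog 2 (a+b+1) with hκ2def
    have hκ1 : 1 ≤ κ1 := clog_pos (by omega)
    have hκ2 : 2 ≤ κ2 := clog_ge_two (by omega)
    have hlb1 : 2^(κ1-1) < a+b := clog_lb (by omega)
    have hub1 : a+b ≤ 2^κ1 := clog_ub _
    have hlb2 : 2^(κ2-1) < a+b+1 := clog_lb (by omega)
    have hub2 : a+b+1 ≤ 2^κ2 := clog_ub _
    have e1 : 2^κ2 = 2*2^(κ2-1) := two_pow_pred (by omega)
    have e2 : 2^(κ2-1) = 2*2^(κ2-2) := by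
      conv_lhs => rw [show κ2-1 = (κ2-2)+1 by omega, pow_succ, mul_comm]
    have e3 : 2^(κ1-1) = 2*2^(κ1-2) ∨ (2^(κ1-1) = 1 ∧ 2^(κ1-2) = 1) := by
      rcases Nat.lt_or_ge κ1 2 with h | h
      · right; rw [show κ1 - 1 = 0 by omega, show κ1 - 2 = 0 by omega]; simp
      · left; conv_lhs => rw [show κ1-1 = (κ1-2)+1 by omega, pow_succ, mul_comm]
    have e4 : 2^κ1 = 2*2^(κ1-1) := two_pow_pred (by omega)
    have hk : Nat.clog 2 (2*a + (2*b+1)) = κ2 + 1 := by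
      rw [show 2*a+(2*b+1) = 2*(a+b)+1 by ring]
      exact clog_eq_succ (by omega) (by rw [pow_succ]; omega)
    rw [hk, show 2*a+(2*b+1) = 2*(a+b)+1 by ring, F_odd (by omega : 1 ≤ a+b),
      F_even ha, F_odd hb]
    rw [show κ2 + 1 - 2 = κ2 - 1 by omega, Nat.add_sub_cancel]
    have hmono : κ1 ≤ κ2 := by
      rw [hκ1def, hκ2def]; exact Nat.clog_mono_right _ (by omega)
    have hup : κ2 ≤ κ1 + 1 := by
      rw [hκ2def]
      exact (Nat.clog_le_iff_le_pow one_lt_two).mpr (by rw [pow_succ]; omega)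
    clear_value κ1 κ2
    rcases (show κ2 = κ1 ∨ κ2 = κ1 + 1 by omega) with hc | hc <;> subst hc
    · omega
    · rw [show κ1 + 1 - 2 = κ1 - 1 by omega, Nat.add_sub_cancel] at *
      omega
  · -- p = 2a+1, q = 2b : odd-even
    obtain ⟨a, rfl⟩ : ∃ a, p = 2*a+1 := ⟨p/2, by omega⟩
    obtain ⟨b, rfl⟩ : ∃ b, q = 2*b := ⟨q/2, by omega⟩
    have ha : 1 ≤ a := by omega
    have hab : a + 1 ≤ b := by omega
    have IH1 := IH (a+b) (by omega) a b rfl (by omega) (by omega)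
    have IH2 := IH (a+b+1) (by omega) (a+1) b (by omega) (by omega) (by omega)
    set κ1 := Nat.clog 2 (a+b) with hκ1def
    set κ2 := Nat.clog 2 (a+b+1) with hκ2def
    have hκ1 : 2 ≤ κ1 := clog_ge_two (by omega)
    have hκ2 : 2 ≤ κ2 := clog_ge_two (by omega)
    have hlb1 : 2^(κ1-1) < a+b := clog_lb (by omega)
    have hub1 : a+b ≤ 2^κ1 := clog_ub _
    have hlb2 : 2^(κ2-1) < a+b+1 := clog_lb (by omega)
    have hub2 : a+b+1 ≤ 2^κ2 := clog_ub _
    have e1 : 2^κ2 = 2*2^(κ2-1) := two_pow_pred (by omega)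
    have e2 : 2^(κ2-1) = 2*2^(κ2-2) := by
      conv_lhs => rw [show κ2-1 = (κ2-2)+1 by omega, pow_succ, mul_comm]
    have e3 : 2^(κ1-1) = 2*2^(κ1-2) := by
      conv_lhs => rw [show κ1-1 = (κ1-2)+1 by omega, pow_succ, mul_comm]
    have e4 : 2^κ1 = 2*2^(κ1-1) := two_pow_pred (by omega)
    have hk : Nat.clog 2 (2*a+1 + 2*b) = κ2 + 1 := by
      rw [show 2*a+1+2*b = 2*(a+b)+1 by ring]
      exact clog_eq_succ (by omega) (by rw [pow_succ]; omega)
    rw [hk, show 2*a+1+2*b = 2*(a+b)+1 by ring, F_odd (by omega : 1 ≤ a+b),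
      F_odd ha, F_even (by omega : 1 ≤ b)]
    rw [show κ2 + 1 - 2 = κ2 - 1 by omega, Nat.add_sub_cancel]
    have hmono : κ1 ≤ κ2 := by
      rw [hκ1def, hκ2def]; exact Nat.clog_mono_right _ (by omega)
    have hup : κ2 ≤ κ1 + 1 := by
      rw [hκ2def]
      exact (Nat.clog_le_iff_le_pow one_lt_two).mpr (by rw [pow_succ]; omega)
    clear_value κ1 κ2
    rcases (show κ2 = κ1 ∨ κ2 = κ1 + 1 by omega) with hc | hc <;> subst hc
    · omega
    · rw [show κ1 + 1 - 2 = κ1 - 1 by omega, Nat.add_sub_cancel] at *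
      omega
  · -- p = 2a+1, q = 2b+1 : odd-odd
    obtain ⟨a, rfl⟩ : ∃ a, p = 2*a+1 := ⟨p/2, by omega⟩
    obtain ⟨b, rfl⟩ : ∃ b, q = 2*b+1 := ⟨q/2, by omega⟩
    have ha : 1 ≤ a := by omega
    have hab : a + 1 ≤ b := by omega
    have IH1 := IH (a+b+1) (by omega) a (b+1) rfl (by omega) (by omega)
    have IH2 := IH (a+b+1) (by omega) (a+1) b (by omega) (by omega) (by omega)
    set κ := Nat.clog 2 (a+b+1) with hκdef
    have hκ2 : 2 ≤ κ := clog_ge_two (by omega)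
    have hlb : 2^(κ-1) < a+b+1 := clog_lb (by omega)
    have hub : a+b+1 ≤ 2^κ := clog_ub _
    have e1 : 2^κ = 2*2^(κ-1) := two_pow_pred (by omega)
    have e2 : 2^(κ-1) = 2*2^(κ-2) := by
      conv_lhs => rw [show κ-1 = (κ-2)+1 by omega, pow_succ, mul_comm]
    have hk : Nat.clog 2 (2*a+1 + (2*b+1)) = κ + 1 := by
      rw [show 2*a+1+(2*b+1) = 2*(a+b+1) by ring]
      exact clog_eq_succ (by omega) (by rw [pow_succ]; omega)
    rw [hk, show 2*a+1+(2*b+1) = 2*(a+b+1) by ring, F_even (by omega : 1 ≤ a+b+1),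
      F_odd ha, F_odd (by omega : 1 ≤ b)]
    rw [show κ + 1 - 2 = κ - 1 by omega, Nat.add_sub_cancel]
    omega

/-! ### The G function: minimal Sackin index is G n + n - 1 -/

def G (n : ℕ) : ℕ := ∑ j ∈ Finset.range n, (n - 2^j)

lemma G_eq {n K : ℕ} (h : n ≤ 2^K) : G n = ∑ j ∈ Finset.range K, (n - 2^j) := by
  rcases le_total K n with hKn | hKn
  · refine (Finset.sum_subset (Finset.range_subset_range.mpr hKn) ?_).symm
    intro j _ hj
    simp only [Finset.mem_range, not_lt] at hj
    have : 2^K ≤ 2^j := Nat.pow_le_pow_right (by norm_num) hj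
    omega
  · refine Finset.sum_subset (Finset.range_subset_range.mpr hKn) ?_
    intro j _ hj
    simp only [Finset.mem_range, not_lt] at hj
    have h1 : n < 2^n := (Nat.lt_two_pow_self (n := n))
    have : 2^n ≤ 2^j := Nat.pow_le_pow_right (by norm_num) hj
    omega

lemma G_even {m : ℕ} (hm : 1 ≤ m) : G (2*m) + 1 = 2 * G m + 2*m := by
  have h1 : 2*m ≤ 2^(m+1) := by
    have := (Nat.lt_two_pow_self (n := m)); rw [pow_succ]; omega
  rw [G_eq h1, Finset.sum_range_succ']
  have hcongr : ∀ j ∈ Finset.range m, 2*m - 2^(j+1) = 2*(m - 2^j) := by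
    intro j _; rw [pow_succ]; omega
  rw [Finset.sum_congr rfl hcongr, ← Finset.mul_sum, ← G_eq (le_of_lt ((Nat.lt_two_pow_self (n := m))))]
  simp only [pow_zero]
  omega

lemma G_odd (m : ℕ) : G (2*m+1) = G m + G (m+1) + 2*m := by
  have h1 : 2*m+1 ≤ 2^(m+1+1) := by
    have := (Nat.lt_two_pow_self (n := m)); rw [pow_succ, pow_succ]; omega
  rw [G_eq h1, Finset.sum_range_succ']
  have hcongr : ∀ j ∈ Finset.range (m+1), 2*m+1 - 2^(j+1) = (m - 2^j) + (m+1 - 2^j) := by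
    intro j _
    have : 1 ≤ 2^j := Nat.one_le_two_pow
    rw [pow_succ]; omega
  rw [Finset.sum_congr rfl hcongr, Finset.sum_add_distrib,
    ← G_eq (le_of_lt (by have := (Nat.lt_two_pow_self (n := m)); rw [pow_succ]; omega : m < 2^(m+1))),
    ← G_eq (by have := (Nat.lt_two_pow_self (n := m)); rw [pow_succ]; omega : m+1 ≤ 2^(m+1))]
  simp only [pow_zero]
  omega

lemma min_sum_bound (n : ℕ) (hn : 1 ≤ n) :
    ∀ K, (∑ j ∈ Finset.range K, min (2^j) (n - 2^j)) ≤ n - 1 ∧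
      (∑ j ∈ Finset.range K, min (2^j) (n - 2^j)) ≤ 2^K - 1 := by
  intro K
  induction K with
  | zero => simp
  | succ K IH =>
    rw [Finset.sum_range_succ]
    have hp : (2:ℕ)^(K+1) = 2*2^K := by rw [pow_succ]; ring
    have h1 : (1:ℕ) ≤ 2^K := Nat.one_le_two_pow
    omega

lemma G_superadd {p q : ℕ} (hp : 1 ≤ p) (hq : 1 ≤ q) :
    G (p+q) + 1 ≤ G p + G q + (p+q) := by
  set K := p + q with hK
  have hn : p + q ≤ 2^K := le_of_lt ((Nat.lt_two_pow_self (n := K)))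
  rw [G_eq hn, G_eq (le_trans (by omega) hn), G_eq (le_trans (by omega) hn)]
  have hterm : ∀ j ∈ Finset.range K,
      (p + q - 2^j) ≤ (p - 2^j) + (q - 2^j) + min (2^j) (p + q - 2^j) := by
    intro j _; omega
  have hsum := Finset.sum_le_sum hterm
  rw [Finset.sum_add_distrib, Finset.sum_add_distrib] at hsum
  have hmin := (min_sum_bound (p+q) (by omega) K).1
  omega

lemma two_pow_geom : ∀ κ : ℕ, (∑ j ∈ Finset.range κ, 2^j) + 1 = 2^κ := by
  intro κ
  induction κ with
  | zero => simp
  | succ κ IH => rw [Finset.sum_range_succ, pow_succ]; omega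

lemma G_interval {m κ : ℕ} (h1 : 2^κ ≤ 2*m) (h2 : m ≤ 2^κ) : G m + 2^κ = κ * m + 1 := by
  rw [G_eq h2]
  have hcongr : ∀ j ∈ Finset.range κ, (m - 2^j) + 2^j = m := by
    intro j hj
    simp only [Finset.mem_range] at hj
    have : 2^(j+1) ≤ 2^κ := Nat.pow_le_pow_right (by norm_num) (by omega)
    rw [pow_succ] at this
    omega
  have hsplit : (∑ j ∈ Finset.range κ, (m - 2^j)) + (∑ j ∈ Finset.range κ, 2^j)
      = ∑ j ∈ Finset.range κ, m := by
    rw [← Finset.sum_add_distrib]; exact Finset.sum_congr rfl hcongr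
  rw [Finset.sum_const, Finset.card_range, smul_eq_mul] at hsplit
  have := two_pow_geom κ
  omega

/-! ### Trees -/

namespace FBT

lemma leaves_pos : ∀ T : FBT, 1 ≤ T.leaves
  | leaf => le_rfl
  | node a b => by have := leaves_pos a; have := leaves_pos b; simp [leaves]; omega

/-- a maximally balanced tree -/
def bal (n : ℕ) : FBT :=
  if h : n ≤ 1 then leaf else node (bal ((n+1)/2)) (bal (n/2))
decreasing_by all_goals omega

lemma bal_of_le_one {n : ℕ} (h : n ≤ 1) : bal n = leaf := by rw [bal]; simp [h]

lemma bal_of_ge_two {n : ℕ} (h : 2 ≤ n) : bal n = node (bal ((n+1)/2)) (bal (n/2)) := by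
  rw [bal]; simp [show ¬ (n ≤ 1) by omega]

lemma leaves_bal : ∀ n, 1 ≤ n → (bal n).leaves = n := by
  intro n
  induction n using Nat.strong_induction_on with
  | _ n IH =>
  intro hn
  rcases le_or_gt n 1 with h | h
  · have : n = 1 := by omega
    subst this; rw [bal_of_le_one le_rfl]; rfl
  · rw [bal_of_ge_two (by omega), leaves,
      IH ((n+1)/2) (by omega) (by omega), IH (n/2) (by omega) (by omega)]
    omega

lemma colless_bal : ∀ n, 1 ≤ n → (bal n).colless = F n := by
  intro n
  induction n using Nat.strong_induction_on with
  | _ n IH =>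
  intro hn
  rcases le_or_gt n 1 with h | h
  · have : n = 1 := by omega
    subst this; rw [bal_of_le_one le_rfl, F1]; rfl
  · rw [bal_of_ge_two (by omega), colless,
      IH ((n+1)/2) (by omega) (by omega), IH (n/2) (by omega) (by omega),
      leaves_bal ((n+1)/2) (by omega), leaves_bal (n/2) (by omega)]
    rcases Nat.mod_two_eq_zero_or_one n with hp | hp
    · obtain ⟨m, rfl⟩ : ∃ m, n = 2*m := ⟨n/2, by omega⟩
      rw [F_even (by omega : 1 ≤ m), show (2*m+1)/2 = m by omega, show (2*m)/2 = m by omega]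
      have hd : Nat.dist m m = m - m + (m - m) := rfl
      omega
    · obtain ⟨m, rfl⟩ : ∃ m, n = 2*m+1 := ⟨n/2, by omega⟩
      rw [F_odd (by omega : 1 ≤ m), show (2*m+1+1)/2 = m+1 by omega,
        show (2*m+1)/2 = m by omega]
      have hd : Nat.dist (m+1) m = (m+1) - m + (m - (m+1)) := rfl
      omega

lemma sackin_bal : ∀ n, 1 ≤ n → (bal n).sackin + 1 = G n + n := by
  intro n
  induction n using Nat.strong_induction_on with
  | _ n IH =>
  intro hn
  rcases le_or_gt n 1 with h | h
  · have : n = 1 := by omega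
    subst this; rw [bal_of_le_one le_rfl]
    have : G 1 = 0 := by simp [G]
    rw [this]; rfl
  · rw [bal_of_ge_two (by omega), sackin,
      leaves_bal ((n+1)/2) (by omega), leaves_bal (n/2) (by omega)]
    have h1 := IH ((n+1)/2) (by omega) (by omega)
    have h2 := IH (n/2) (by omega) (by omega)
    rcases Nat.mod_two_eq_zero_or_one n with hp | hp
    · obtain ⟨m, rfl⟩ : ∃ m, n = 2*m := ⟨n/2, by omega⟩
      rw [show (2*m+1)/2 = m by omega, show (2*m)/2 = m by omega] at *
      have := G_even (by omega : 1 ≤ m)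
      omega
    · obtain ⟨m, rfl⟩ : ∃ m, n = 2*m+1 := ⟨n/2, by omega⟩
      rw [show (2*m+1+1)/2 = m+1 by omega, show (2*m+1)/2 = m by omega] at *
      have := G_odd m
      omega

lemma F_le_colless : ∀ T : FBT, F T.leaves ≤ T.colless := by
  intro T
  induction T with
  | leaf => rw [show (leaf).leaves = 1 from rfl, F1]; exact Nat.zero_le _
  | node a b iha ihb =>
    rw [show (node a b).leaves = a.leaves + b.leaves from rfl, colless]
    have hpa := leaves_pos a
    have hpb := leaves_pos b
    have hd : Nat.dist a.leaves b.leaves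
        = a.leaves - b.leaves + (b.leaves - a.leaves) := rfl
    rcases le_total a.leaves b.leaves with hle | hle
    · have := key (a.leaves + b.leaves) a.leaves b.leaves rfl (by omega) hle
      omega
    · have := key (a.leaves + b.leaves) b.leaves a.leaves (by omega) (by omega) hle
      omega

lemma G_le_sackin : ∀ T : FBT, G T.leaves + T.leaves ≤ T.sackin + 1 := by
  intro T
  induction T with
  | leaf =>
    have : G 1 = 0 := by simp [G]
    rw [show (leaf).leaves = 1 from rfl, this]
    exact le_rfl
  | node a b iha ihb =>
    rw [show (node a b).leaves = a.leaves + b.leaves from rfl, sackin]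
    have hpa := leaves_pos a
    have hpb := leaves_pos b
    have := G_superadd hpa hpb
    omega

end FBT

/-! ### Minimal indices -/

lemma minColless_le (T : FBT) : minColless T.leaves ≤ T.colless :=
  Nat.sInf_le ⟨T, rfl, rfl⟩

lemma minSackin_le (T : FBT) : minSackin T.leaves ≤ T.sackin :=
  Nat.sInf_le ⟨T, rfl, rfl⟩

lemma exists_minColless {n : ℕ} (h : 1 ≤ n) :
    ∃ T : FBT, T.leaves = n ∧ T.colless = minColless n :=
  Nat.sInf_mem (s := {m : ℕ | ∃ T : FBT, T.leaves = n ∧ T.colless = m})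
    ⟨(FBT.bal n).colless, FBT.bal n, FBT.leaves_bal n h, rfl⟩

lemma exists_minSackin {n : ℕ} (h : 1 ≤ n) :
    ∃ T : FBT, T.leaves = n ∧ T.sackin = minSackin n :=
  Nat.sInf_mem (s := {m : ℕ | ∃ T : FBT, T.leaves = n ∧ T.sackin = m})
    ⟨(FBT.bal n).sackin, FBT.bal n, FBT.leaves_bal n h, rfl⟩

lemma minColless_eq_F {n : ℕ} (h : 1 ≤ n) : minColless n = F n := by
  refine le_antisymm (Nat.sInf_le ⟨FBT.bal n, FBT.leaves_bal n h, FBT.colless_bal n h⟩) ?_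
  obtain ⟨T, hT, hc⟩ := exists_minColless h
  rw [← hc, ← hT]
  exact FBT.F_le_colless T

lemma minSackin_eq_G {n : ℕ} (h : 1 ≤ n) : minSackin n + 1 = G n + n := by
  have h1 : minSackin n ≤ (FBT.bal n).sackin :=
    Nat.sInf_le ⟨FBT.bal n, FBT.leaves_bal n h, rfl⟩
  have h2 := FBT.sackin_bal n h
  obtain ⟨T, hT, hs⟩ := exists_minSackin h
  have h3 := FBT.G_le_sackin T
  rw [hT, hs] at h3
  omega

set_option maxHeartbeats 1600000 in
/-- The main lemma: a tree with minimal Colless index has minimal Sackin index. -/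
lemma sackin_min_of_colless_min :
    ∀ T : FBT, T.colless = minColless T.leaves → T.sackin = minSackin T.leaves := by
  intro T
  induction T with
  | leaf =>
    intro _
    have h1 : minSackin 1 = 0 :=
      Nat.sInf_eq_zero.mpr (Or.inl ⟨FBT.leaf, rfl, rfl⟩)
    rw [show (FBT.leaf).leaves = 1 from rfl, h1]
    rfl
  | node a b iha ihb =>
    intro hmin
    have hp := FBT.leaves_pos a
    have hq := FBT.leaves_pos b
    rw [show (FBT.node a b).leaves = a.leaves + b.leaves from rfl] at hmin ⊢
    rw [show (FBT.node a b).colless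
      = a.colless + b.colless + Nat.dist a.leaves b.leaves from rfl] at hmin
    rw [show (FBT.node a b).sackin = a.sackin + b.sackin + (a.leaves + b.leaves) from rfl]
    set p := a.leaves with hpdef
    set q := b.leaves with hqdef
    -- step 1 : combining minimal trees gives an upper bound for minColless (p+q)
    obtain ⟨Ta, hTa, hca⟩ := exists_minColless hp
    obtain ⟨Tb, hTb, hcb⟩ := exists_minColless hq
    have hub : minColless (p+q) ≤ minColless p + minColless q + Nat.dist p q := by
      have hmem : (FBT.node Ta Tb).leaves = p + q := by
        rw [show (FBT.node Ta Tb).leaves = Ta.leaves + Tb.leaves from rfl, hTa, hTb]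
      have h5 : minColless (p+q) ≤ (FBT.node Ta Tb).colless := Nat.sInf_le ⟨_, hmem, rfl⟩
      rw [show (FBT.node Ta Tb).colless
        = Ta.colless + Tb.colless + Nat.dist Ta.leaves Tb.leaves from rfl,
        hTa, hTb, hca, hcb] at h5
      exact h5
    have h1 : minColless p ≤ a.colless := minColless_le a
    have h2 : minColless q ≤ b.colless := minColless_le b
    -- step 2 : the split is Colless-optimal
    have hca' : a.colless = minColless p := by omega
    have hcb' : b.colless = minColless q := by omega
    have heq : minColless p + minColless q + Nat.dist p q = minColless (p+q) := by omega
    -- step 3 : induction hypothesis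
    have hsa : a.sackin = minSackin p := iha hca'
    have hsb : b.sackin = minSackin q := ihb hcb'
    -- step 4 : rewrite via F and get the split bounds from `key`
    rw [minColless_eq_F hp, minColless_eq_F hq, minColless_eq_F (by omega : 1 ≤ p + q)] at heq
    set k := Nat.clog 2 (p+q) with hkdef
    have hbounds : 2^(k-2) ≤ p ∧ 2^(k-2) ≤ q ∧ p ≤ 2^(k-1) ∧ q ≤ 2^(k-1) := by
      rcases le_total p q with hle | hle
      · have hd : Nat.dist p q = p - q + (q - p) := rfl
        have := key (p+q) p q rfl (by omega) hle
        rw [← hkdef] at this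
        omega
      · have hd : Nat.dist p q = p - q + (q - p) := rfl
        have hk' : Nat.clog 2 (q+p) = k := by rw [hkdef, Nat.add_comm]
        have := key (q+p) q p rfl (by omega) hle
        rw [hk', Nat.add_comm q p] at this
        omega
    -- step 5 : powers bookkeeping
    have hk1 : 1 ≤ k := clog_pos (by omega)
    have hlbn : 2^(k-1) < p + q := clog_lb (by omega)
    have hubn : p + q ≤ 2^k := clog_ub _
    have e1 : 2^k = 2*2^(k-1) := two_pow_pred hk1
    have e2 : 2^(k-1) = 2*2^(k-2) ∨ (2^(k-1) = 1 ∧ 2^(k-2) = 1) := by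
      rcases Nat.lt_or_ge k 2 with h | h
      · right; rw [show k - 1 = 0 by omega, show k - 2 = 0 by omega]; simp
      · left; conv_lhs => rw [show k-1 = (k-2)+1 by omega, pow_succ, mul_comm]
    -- step 6 : G-values on the optimal interval
    have hGp : G p + 2^(k-1) = (k-1) * p + 1 :=
      G_interval (by omega) (by omega)
    have hGq : G q + 2^(k-1) = (k-1) * q + 1 :=
      G_interval (by omega) (by omega)
    have hGn : G (p+q) + 2^k = k * (p+q) + 1 :=
      G_interval (by omega) (by omega)
    have hmul1 : (k-1) * (p+q) = (k-1) * p + (k-1) * q := Nat.mul_add _ _ _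
    have hmul2 : k * (p+q) = (k-1) * (p+q) + (p+q) := by
      conv_lhs => rw [show k = (k-1)+1 by omega]
      rw [Nat.add_mul, Nat.one_mul]
    -- step 7 : conclude
    have hmsp := minSackin_eq_G hp
    have hmsq := minSackin_eq_G hq
    have hmsn := minSackin_eq_G (by omega : 1 ≤ p + q)
    rw [hsa, hsb]
    omega

lemma finite_leaves : ∀ n : ℕ, {T : FBT | T.leaves = n}.Finite := by
  intro n
  induction n using Nat.strong_induction_on with
  | _ n IH =>
  rcases Nat.eq_zero_or_pos n with rfl | hn
  · have : {T : FBT | T.leaves = 0} = ∅ := by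
      ext T
      simp only [Set.mem_setOf_eq, Set.mem_empty_iff_false, iff_false]
      have := FBT.leaves_pos T
      omega
    rw [this]; exact Set.finite_empty
  · apply Set.Finite.subset (s := insert FBT.leaf
      (⋃ p ∈ Finset.Ico 1 n, Set.image2 FBT.node {T : FBT | T.leaves = p}
        {T : FBT | T.leaves = n - p}))
    · refine Set.Finite.insert _ (Set.Finite.biUnion (Finset.Ico 1 n).finite_toSet ?_)
      intro p hp
      simp only [Finset.coe_Ico, Set.mem_Ico] at hp
      exact Set.Finite.image2 _ (IH p (by omega)) (IH (n-p) (by omega))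
    · intro T hT
      simp only [Set.mem_setOf_eq] at hT
      cases T with
      | leaf =>
        have : n = 1 := by rw [← hT]; rfl
        subst this
        exact Set.mem_insert _ _
      | node a b =>
        have hab : a.leaves + b.leaves = n := hT
        have hpa := FBT.leaves_pos a
        have hpb := FBT.leaves_pos b
        refine Set.mem_insert_of_mem _ ?_
        refine Set.mem_biUnion (s := (Finset.Ico 1 n : Set ℕ))
          (show a.leaves ∈ (Finset.Ico 1 n : Set ℕ) by
            simp only [Finset.coe_Ico, Set.mem_Ico]; omega) ?_
        exact ⟨a, rfl, b, by simp only [Set.mem_setOf_eq]; omega, rfl⟩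

theorem min_colless_subset_min_sackin (n : ℕ) (hn : 1 ≤ n) :
    {T : FBT | T.leaves = n ∧ T.colless = minColless n} ⊆
      {T : FBT | T.leaves = n ∧ T.sackin = minSackin n} ∧
    Set.ncard {T : FBT | T.leaves = n ∧ T.colless = minColless n} ≤
      Set.ncard {T : FBT | T.leaves = n ∧ T.sackin = minSackin n} := by
  have hsub : {T : FBT | T.leaves = n ∧ T.colless = minColless n} ⊆
      {T : FBT | T.leaves = n ∧ T.sackin = minSackin n} := by
    intro T hT
    obtain ⟨h1, h2⟩ := hT
    refine ⟨h1, ?_⟩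
    have := sackin_min_of_colless_min T (by rw [h1]; exact h2)
    rw [h1] at this
    exact this
  refine ⟨hsub, Set.ncard_le_ncard hsub ?_⟩
  exact (finite_leaves n).subset (fun T hT => hT.1)
end
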